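/- arXiv:2404.13381 — 2 statements merged into one kernel-verified Lean document; each statement's English description precedes it below -/
import Mathlib

section
/- Let K_S, K_E, K_0, K_1 ∈ [0,1) and let Q(μ) = (K_S·P(μ) + K_E·(1 - P(μ)))·K_1 + K_0 where P(μ) = (1-p0)·(1-p1·μ)·∏_{c=2}^C(1-p1·μ_c) with p0, p1 ∈ (0,1) and μ_c ∈ [0,1]. Then for any μ, μ' ∈ [0, γ] with γ ∈ [0,1], |Q(μ) - Q(μ')| ≤ p1·γ. -/
theorem affine_noisy_or_sensitivity (C : ℕ) (p0 p1 : ℝ)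
    (hp0 : p0 ∈ Set.Ioo (0:ℝ) 1) (hp1 : p1 ∈ Set.Ioo (0:ℝ) 1)
    (KS KE K0 K1 : ℝ)
    (hKS : KS ∈ Set.Ico (0:ℝ) 1) (hKE : KE ∈ Set.Ico (0:ℝ) 1)
    (hK0 : K0 ∈ Set.Ico (0:ℝ) 1) (hK1 : K1 ∈ Set.Ico (0:ℝ) 1)
    (μrest : Fin C → ℝ) (hμrest : ∀ c, μrest c ∈ Set.Icc (0:ℝ) 1)
    (γ : ℝ) (hγ : γ ∈ Set.Icc (0:ℝ) 1)
    (P : ℝ → ℝ) (hP : ∀ x, P x = (1 - p0) * (1 - p1 * x) * ∏ c, (1 - p1 * μrest c))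
    (Q : ℝ → ℝ) (hQ : ∀ x, Q x = (KS * P x + KE * (1 - P x)) * K1 + K0)
    (μ μ' : ℝ) (hμ : μ ∈ Set.Icc 0 γ) (hμ' : μ' ∈ Set.Icc 0 γ) :
    |Q μ - Q μ'| ≤ p1 * γ := by
  obtain ⟨hp0a, hp0b⟩ := hp0
  obtain ⟨hp1a, hp1b⟩ := hp1
  set Pr : ℝ := ∏ c, (1 - p1 * μrest c) with hPr
  have hPr0 : 0 ≤ Pr := Finset.prod_nonneg (fun c _ => by
    nlinarith [(hμrest c).1, (hμrest c).2])
  have hPr1 : Pr ≤ 1 := by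
    have := Finset.prod_le_prod (s := Finset.univ)
        (f := fun c => 1 - p1 * μrest c) (g := fun _ => (1:ℝ))
        (fun c _ => show (0:ℝ) ≤ 1 - p1 * μrest c by nlinarith [(hμrest c).1, (hμrest c).2])
        (fun c _ => show (1:ℝ) - p1 * μrest c ≤ 1 by nlinarith [(hμrest c).1])
    simpa using this
  have key : Q μ - Q μ' = (KS - KE) * K1 * ((1 - p0) * Pr) * (p1 * (μ' - μ)) := by
    rw [hQ, hQ, hP, hP]; ring
  rw [key, abs_mul, abs_mul, abs_mul]
  have h1 : |KS - KE| ≤ 1 := by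
    rw [abs_le]; constructor <;> nlinarith [hKS.1, hKS.2, hKE.1, hKE.2]
  have h2 : |K1| ≤ 1 := by rw [abs_le]; constructor <;> nlinarith [hK1.1, hK1.2]
  have h3 : |(1 - p0) * Pr| ≤ 1 := by
    rw [abs_le]; constructor <;> nlinarith
  have h4 : |p1 * (μ' - μ)| ≤ p1 * γ := by
    rw [abs_mul, abs_of_pos hp1a]
    have : |μ' - μ| ≤ γ := by
      rw [abs_le]; constructor <;> nlinarith [hμ.1, hμ.2, hμ'.1, hμ'.2]
    nlinarith
  calc |KS - KE| * |K1| * |(1 - p0) * Pr| * |p1 * (μ' - μ)| ≤ 1 * 1 * 1 * (p1 * γ) := by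
        refine mul_le_mul ?_ h4 (by positivity) (by norm_num)
        have : |KS - KE| * |K1| * |(1 - p0) * Pr| ≤ 1 * 1 * 1 :=
          mul_le_mul (mul_le_mul h1 h2 (abs_nonneg _) (by norm_num)) h3 (abs_nonneg _) (by norm_num)
        linarith
    _ = p1 * γ := by ring
end

section
/- Let F be a real-valued function on datasets with sensitivity Δ, i.e., |F(D) - F(D')| ≤ Δ for all adjacent D, D'. For ε ∈ (0,1) and δ ∈ (0,1), the mechanism M(D) = F(D) + N(0, σ²) with σ² = (2Δ²/ε²)·log(5/(4δ)) ≥ (2Δ²/ε²)·log(1.25/δ) satisfies (ε, δ)-differential privacy. -/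
open MeasureTheory ProbabilityTheory Set Real
open scoped NNReal ENNReal

/-!
With `a = μ - ν`, the density of `N(μ, v)` is `exp (a * (2 * (x - μ) + a) / (2 * v))` times
that of `N(ν, v)`. Off the set where this exponent exceeds `ε` the `(ε, δ)` inequality holds
pointwise, and that set is a half-line whose `N(μ, v)`-mass, by symmetry and monotonicity in
`|a| ≤ Δ`, is at most the Gaussian tail beyond `μ + T`, where `T = Δ (4L - ε) / (2ε)` and
`L = log (5 / (4δ))`, so that `δ = 5/4 e^{-L}`. If `T ≥ 0` the tail is at most
`exp (-T² / (2v)) / 2 = exp (ε / 2 - L - ε² / (16 L)) / 2 ≤ δ`; if `T < 0` then `L < 1/4`, so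
`δ ≥ 15/16`, and the crude bound `1/2 + |T| / √(2πv) ≤ 5/6` suffices.
-/

namespace MeasureTheory

theorem withDensity_le_mul_add_withDensity_setOf_lt {α : Type*} [MeasurableSpace α]
    (ρ : Measure α) [SFinite ρ] (f : α → ℝ≥0∞) {g : α → ℝ≥0∞} (hg : Measurable g)
    (c : ℝ≥0∞) (s : Set α) :
    ρ.withDensity f s ≤ c * ρ.withDensity g s + ρ.withDensity f {x | c * g x < f x} := by
  calc ρ.withDensity f s
      ≤ ρ.withDensity f (s ∩ {x | f x ≤ c * g x}) + ρ.withDensity f (s \ {x | f x ≤ c * g x}) :=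
        measure_le_inter_add_sdiff _ _ _
    _ ≤ c * ρ.withDensity g s + ρ.withDensity f {x | c * g x < f x} := by
      gcongr ?_ + ?_
      · rw [withDensity_apply', withDensity_apply', ← lintegral_const_mul _ hg]
        calc ∫⁻ x in s ∩ {x | f x ≤ c * g x}, f x ∂ρ
            ≤ ∫⁻ x in s ∩ {x | f x ≤ c * g x}, c * g x ∂ρ :=
              setLIntegral_mono (hg.const_mul c) fun x hx ↦ hx.2
          _ ≤ ∫⁻ x in s, c * g x ∂ρ := lintegral_mono_set inter_subset_left
      · exact measure_mono fun x hx ↦ show c * g x < f x from not_le.mp hx.2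

end MeasureTheory

lemma setOf_lt_mul_subset_Ici {μ a Δ c : ℝ} (hc : 0 ≤ c) (ha : 0 ≤ a) (haΔ : a ≤ Δ) :
    {x | c < a * (2 * (x - μ) + a)} ⊆ Ici (μ + (c / Δ - Δ) / 2) := by
  intro x (hx : c < a * (2 * (x - μ) + a))
  have hprod : 0 < a * (2 * (x - μ) + a) := hc.trans_lt hx
  have hy : 0 < 2 * (x - μ) + a := pos_of_mul_pos_right hprod ha
  have hΔ : 0 < Δ := (pos_of_mul_pos_left hprod hy.le).trans_le haΔ
  have hmono : c ≤ Δ * (2 * (x - μ) + Δ) := by nlinarith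
  have : c / Δ ≤ 2 * (x - μ) + Δ := (div_le_iff₀' hΔ).mpr hmono
  show μ + (c / Δ - Δ) / 2 ≤ x
  linarith

lemma exp_neg_threshold_sq_div_le {Δ ε L v : ℝ} (hΔ : 0 < Δ) (hε0 : 0 < ε) (hε1 : ε < 1)
    (hL : 0 < L) (hv : v = 2 * Δ ^ 2 / ε ^ 2 * L) :
    rexp (-(Δ * (4 * L - ε) / (2 * ε)) ^ 2 / (2 * v)) / 2 ≤ 5 / 4 * rexp (-L) := by
  have hexponent : -(Δ * (4 * L - ε) / (2 * ε)) ^ 2 / (2 * v) = ε / 2 - L - ε ^ 2 / (16 * L) := by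
    rw [hv]
    field_simp
    ring
  have hexp_half : rexp (1 / 2) ≤ 2 := by
    have := exp_bound_div_one_sub_of_interval' (x := 1 / 2) (by norm_num) (by norm_num)
    norm_num at this ⊢
    exact this.le
  rw [hexponent]
  calc rexp (ε / 2 - L - ε ^ 2 / (16 * L)) / 2 ≤ rexp (1 / 2) * rexp (-L) / 2 := by
        rw [← exp_add]
        gcongr
        linarith [(by positivity : 0 ≤ ε ^ 2 / (16 * L))]
    _ ≤ 2 * rexp (-L) / 2 := by gcongr
    _ ≤ 5 / 4 * rexp (-L) := by linarith [exp_pos (-L)]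

lemma half_sub_threshold_div_sqrt_le {Δ ε L v : ℝ} (hΔ : 0 < Δ) (hε0 : 0 < ε) (hε1 : ε < 1)
    (hL : 1 / 5 ≤ L) (h4L : 4 * L < ε) (hv : v = 2 * Δ ^ 2 / ε ^ 2 * L) :
    2⁻¹ - Δ * (4 * L - ε) / (2 * ε) / √(2 * π * v) ≤ 5 / 4 * rexp (-L) := by
  have hδ : 15 / 16 ≤ 5 / 4 * rexp (-L) := by nlinarith [add_one_le_exp (-L)]
  have hvpos : 0 < v := hv ▸ mul_pos (by positivity) (by linarith)
  have hsqrt : 3 / 2 * Δ ≤ √(2 * π * v) := by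
    refine le_sqrt_of_sq_le ?_
    have : 2 * Δ ^ 2 * L ≤ v := by
      rw [hv, div_mul_eq_mul_div, le_div_iff₀ (by positivity)]
      have hε2 : ε ^ 2 ≤ 1 := by nlinarith
      nlinarith [mul_le_mul_of_nonneg_left hε2 (by positivity : 0 ≤ 2 * Δ ^ 2 * L)]
    nlinarith [mul_le_mul_of_nonneg_right pi_gt_three.le hvpos.le]
  have hshift : Δ * (4 * L - ε) / (2 * ε) = 2 * Δ * L / ε - Δ / 2 := by
    field_simp
    ring
  have hratio : -(Δ * (4 * L - ε) / (2 * ε)) / √(2 * π * v) ≤ 1 / 3 := by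
    rw [div_le_iff₀ (by positivity), hshift]
    linarith [(by positivity : 0 ≤ 2 * Δ * L / ε)]
  rw [neg_div] at hratio
  linarith

namespace ProbabilityTheory

lemma gaussianPDFReal_eq_exp_mul (μ ν : ℝ) (v : ℝ≥0) (x : ℝ) :
    gaussianPDFReal μ v x =
      rexp (((x - ν) ^ 2 - (x - μ) ^ 2) / (2 * v)) * gaussianPDFReal ν v x := by
  rw [gaussianPDFReal, gaussianPDFReal, mul_left_comm, ← Real.exp_add]
  congr 2
  ring

lemma gaussianReal_preimage_two_mul_sub (μ : ℝ) (v : ℝ≥0) {s : Set ℝ} (hs : MeasurableSet s) :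
    gaussianReal μ v ((2 * μ - ·) ⁻¹' s) = gaussianReal μ v s := by
  rw [← Measure.map_apply (by fun_prop) hs, gaussianReal_map_const_sub, two_mul,
    add_sub_cancel_right]

lemma gaussianReal_Ici_self (μ : ℝ) {v : ℝ≥0} (hv : v ≠ 0) : gaussianReal μ v (Ici μ) = 2⁻¹ := by
  have hIic : gaussianReal μ v (Iic μ) = gaussianReal μ v (Ici μ) := by
    rw [← gaussianReal_preimage_two_mul_sub μ v measurableSet_Ici]
    congr 1
    ext x
    simp [two_mul]
  have hIoi : gaussianReal μ v (Ioi μ) = gaussianReal μ v (Ici μ) :=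
    measure_congr (Ioi_ae_eq_Ici' (gaussianReal_absolutelyContinuous μ hv volume_singleton))
  have hsum :=
    measure_union (μ := gaussianReal μ v) (Iic_disjoint_Ioi (le_refl μ)) measurableSet_Ioi
  rw [Iic_union_Ioi, measure_univ, hIic, hIoi, ← two_mul] at hsum
  exact ENNReal.eq_inv_of_mul_eq_one_left (by rw [mul_comm, hsum])

lemma gaussianReal_le_mul_volume (μ : ℝ) {v : ℝ≥0} (hv : v ≠ 0) (s : Set ℝ) :
    gaussianReal μ v s ≤ ENNReal.ofReal (√(2 * π * v))⁻¹ * volume s := by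
  rw [gaussianReal_apply _ hv, ← setLIntegral_const]
  refine setLIntegral_mono measurable_const fun x _ ↦ ENNReal.ofReal_le_ofReal ?_
  refine mul_le_of_le_one_right (by positivity) (exp_le_one_iff.mpr ?_)
  exact div_nonpos_of_nonpos_of_nonneg (neg_nonpos.mpr (sq_nonneg _)) (by positivity)

lemma gaussianReal_Ici_add_le_of_nonneg (μ : ℝ) {v : ℝ≥0} (hv : v ≠ 0) {T : ℝ} (hT : 0 ≤ T) :
    gaussianReal μ v (Ici (μ + T)) ≤ ENNReal.ofReal (rexp (-T ^ 2 / (2 * v)) / 2) := by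
  rw [gaussianReal_apply _ hv]
  calc ∫⁻ x in Ici (μ + T), gaussianPDF μ v x
      ≤ ∫⁻ x in Ici (μ + T), ENNReal.ofReal (rexp (-T ^ 2 / (2 * v))) * gaussianPDF (μ + T) v x :=
        setLIntegral_mono (by fun_prop) fun x (hx : μ + T ≤ x) ↦ by
          rw [gaussianPDF, gaussianPDF, ← ENNReal.ofReal_mul (exp_nonneg _),
            gaussianPDFReal_eq_exp_mul μ (μ + T)]
          refine ENNReal.ofReal_le_ofReal
            (mul_le_mul_of_nonneg_right ?_ (gaussianPDFReal_nonneg _ _ _))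
          gcongr
          nlinarith
    _ = ENNReal.ofReal (rexp (-T ^ 2 / (2 * v))) * gaussianReal (μ + T) v (Ici (μ + T)) := by
        rw [lintegral_const_mul _ (measurable_gaussianPDF _ _), gaussianReal_apply _ hv]
    _ = ENNReal.ofReal (rexp (-T ^ 2 / (2 * v)) / 2) := by
        rw [gaussianReal_Ici_self _ hv, ENNReal.ofReal_div_of_pos two_pos, ENNReal.ofReal_ofNat]
        exact (div_eq_mul_inv _ _).symm

lemma gaussianReal_Ici_add_le_of_nonpos (μ : ℝ) {v : ℝ≥0} (hv : v ≠ 0) {T : ℝ} (hT : T ≤ 0) :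
    gaussianReal μ v (Ici (μ + T)) ≤ ENNReal.ofReal (2⁻¹ - T / √(2 * π * v)) := by
  calc gaussianReal μ v (Ici (μ + T))
      = gaussianReal μ v (Ico (μ + T) μ ∪ Ici μ) := by
        rw [Ico_union_Ici_eq_Ici (by linarith)]
    _ ≤ gaussianReal μ v (Ico (μ + T) μ) + gaussianReal μ v (Ici μ) := measure_union_le _ _
    _ ≤ ENNReal.ofReal (√(2 * π * v))⁻¹ * volume (Ico (μ + T) μ) + 2⁻¹ := by
        rw [gaussianReal_Ici_self _ hv]
        gcongr
        exact gaussianReal_le_mul_volume _ hv _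
    _ = ENNReal.ofReal (2⁻¹ - T / √(2 * π * v)) := by
        have h2 : (2⁻¹ : ℝ≥0∞) = ENNReal.ofReal 2⁻¹ := by
          rw [ENNReal.ofReal_inv_of_pos two_pos, ENNReal.ofReal_ofNat]
        have hT' : 0 ≤ -T := by linarith
        rw [Real.volume_Ico, sub_add_cancel_left, ← ENNReal.ofReal_mul (by positivity), h2,
          ← ENNReal.ofReal_add (by positivity) (by norm_num)]
        congr 1
        ring

lemma setOf_exp_mul_gaussianPDF_lt_subset {μ ν : ℝ} {v : ℝ≥0} (hv : v ≠ 0) (ε : ℝ) :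
    {x | ENNReal.ofReal (rexp ε) * gaussianPDF ν v x < gaussianPDF μ v x} ⊆
      {x | 2 * v * ε < (μ - ν) * (2 * (x - μ) + (μ - ν))} := by
  intro x (hx : ENNReal.ofReal (rexp ε) * gaussianPDF ν v x < gaussianPDF μ v x)
  rw [gaussianPDF, gaussianPDF, ← ENNReal.ofReal_mul (exp_nonneg ε),
    gaussianPDFReal_eq_exp_mul μ ν] at hx
  have hloss := lt_of_mul_lt_mul_right ((ENNReal.ofReal_lt_ofReal_iff'.mp hx).1)
    (gaussianPDFReal_nonneg ν v x)
  rw [exp_lt_exp, lt_div_iff₀ (by positivity)] at hloss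
  show 2 * v * ε < (μ - ν) * (2 * (x - μ) + (μ - ν))
  linarith

lemma gaussianReal_setOf_lt_mul_le (μ : ℝ) (v : ℝ≥0) {a Δ c : ℝ} (hc : 0 ≤ c) (haΔ : |a| ≤ Δ) :
    gaussianReal μ v {x | c < a * (2 * (x - μ) + a)} ≤
      gaussianReal μ v (Ici (μ + (c / Δ - Δ) / 2)) := by
  rcases le_total 0 a with ha | ha
  · exact measure_mono (setOf_lt_mul_subset_Ici hc ha ((le_abs_self a).trans haΔ))
  · have hrefl : {x | c < a * (2 * (x - μ) + a)} =
        (2 * μ - ·) ⁻¹' {x | c < -a * (2 * (x - μ) + -a)} := by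
      ext x
      simp only [mem_ofPred_eq, mem_preimage]
      ring_nf
    rw [hrefl, gaussianReal_preimage_two_mul_sub _ _
      (measurableSet_lt measurable_const (by fun_prop))]
    exact measure_mono (setOf_lt_mul_subset_Ici hc (neg_nonneg.mpr ha) ((neg_le_abs a).trans haΔ))

lemma gaussianReal_le_exp_mul_add_tail {μ ν Δ ε : ℝ} {v : ℝ≥0} (hv : v ≠ 0) (hε : 0 ≤ ε)
    (hμν : |μ - ν| ≤ Δ) (s : Set ℝ) :
    gaussianReal μ v s ≤ ENNReal.ofReal (rexp ε) * gaussianReal ν v s +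
      gaussianReal μ v (Ici (μ + (2 * v * ε / Δ - Δ) / 2)) := by
  have h := withDensity_le_mul_add_withDensity_setOf_lt volume (gaussianPDF μ v)
    (measurable_gaussianPDF ν v) (ENNReal.ofReal (rexp ε)) s
  rw [← gaussianReal_of_var_ne_zero _ hv, ← gaussianReal_of_var_ne_zero _ hv] at h
  refine h.trans (add_le_add le_rfl ?_)
  exact (measure_mono (setOf_exp_mul_gaussianPDF_lt_subset hv ε)).trans
    (gaussianReal_setOf_lt_mul_le μ v (by positivity) hμν)

lemma gaussianReal_Ici_threshold_le (μ : ℝ) {Δ ε L : ℝ} {v : ℝ≥0} (hΔ : 0 < Δ)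
    (hε : ε ∈ Ioo (0 : ℝ) 1) (hL : 1 / 5 ≤ L) (hv : (v : ℝ) = 2 * Δ ^ 2 / ε ^ 2 * L) :
    gaussianReal μ v (Ici (μ + (2 * v * ε / Δ - Δ) / 2)) ≤
      ENNReal.ofReal (5 / 4 * rexp (-L)) := by
  obtain ⟨hε0, hε1⟩ := hε
  have hL0 : 0 < L := by linarith
  have hv0 : v ≠ 0 := fun h ↦ by
    rw [h, NNReal.coe_zero] at hv
    exact (mul_pos (by positivity) hL0).ne hv
  have hT : (2 * v * ε / Δ - Δ) / 2 = Δ * (4 * L - ε) / (2 * ε) := by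
    rw [hv]
    field_simp
    ring
  rw [hT]
  rcases le_or_gt ε (4 * L) with h4L | h4L
  · have hT0 : 0 ≤ Δ * (4 * L - ε) / (2 * ε) :=
      div_nonneg (mul_nonneg hΔ.le (sub_nonneg.mpr h4L)) (by positivity)
    exact (gaussianReal_Ici_add_le_of_nonneg μ hv0 hT0).trans
      (ENNReal.ofReal_le_ofReal (exp_neg_threshold_sq_div_le hΔ hε0 hε1 hL0 hv))
  · have hT0 : Δ * (4 * L - ε) / (2 * ε) ≤ 0 :=
      div_nonpos_of_nonpos_of_nonneg (mul_nonpos_of_nonneg_of_nonpos hΔ.le (by linarith))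
        (by positivity)
    exact (gaussianReal_Ici_add_le_of_nonpos μ hv0 hT0).trans
      (ENNReal.ofReal_le_ofReal (half_sub_threshold_div_sqrt_le hΔ hε0 hε1 hL h4L hv))

lemma gaussianReal_le_exp_mul_add_of_abs_sub_le {μ ν Δ ε δ : ℝ} (hμν : |μ - ν| ≤ Δ)
    (hε : ε ∈ Ioo (0 : ℝ) 1) (hδ : δ ∈ Ioo (0 : ℝ) 1) (s : Set ℝ) :
    gaussianReal μ (2 * Δ ^ 2 / ε ^ 2 * log (5 / (4 * δ))).toNNReal s ≤
      ENNReal.ofReal (rexp ε) * gaussianReal ν (2 * Δ ^ 2 / ε ^ 2 * log (5 / (4 * δ))).toNNReal s +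
        ENNReal.ofReal δ := by
  obtain ⟨hδ0, hδ1⟩ := hδ
  have hε0 : 0 < ε := hε.1
  rcases eq_or_ne μ ν with rfl | hne
  · calc gaussianReal μ _ s = 1 * gaussianReal μ _ s := (one_mul _).symm
      _ ≤ ENNReal.ofReal (rexp ε) * gaussianReal μ _ s := by
          gcongr
          exact ENNReal.one_le_ofReal.mpr (one_le_exp hε0.le)
      _ ≤ _ := le_self_add
  have hΔ : 0 < Δ := (abs_pos.mpr (sub_ne_zero.mpr hne)).trans_le hμν
  set L := log (5 / (4 * δ))
  have hL : 1 / 5 ≤ L := by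
    have := one_sub_inv_le_log_of_pos (x := 5 / (4 * δ)) (by positivity)
    rw [inv_div] at this
    linarith
  have hδL : δ = 5 / 4 * rexp (-L) := by
    rw [exp_neg, exp_log (by positivity)]
    field_simp
  have hv : ((2 * Δ ^ 2 / ε ^ 2 * L).toNNReal : ℝ) = 2 * Δ ^ 2 / ε ^ 2 * L :=
    coe_toNNReal _ (mul_nonneg (by positivity) (by linarith))
  have hv0 : (2 * Δ ^ 2 / ε ^ 2 * L).toNNReal ≠ 0 :=
    (toNNReal_pos.mpr (mul_pos (by positivity) (by linarith))).ne'
  calc _ ≤ _ := gaussianReal_le_exp_mul_add_tail hv0 hε0.le hμν s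
    _ ≤ _ := by
        rw [hδL]
        gcongr
        exact gaussianReal_Ici_threshold_le μ hΔ hε hL hv

end ProbabilityTheory

theorem gaussian_mechanism_general {D : Type*} (adj : D → D → Prop)
    (F : D → ℝ) (Δ : ℝ)
    (hsens : ∀ d d', adj d d' → |F d - F d'| ≤ Δ)
    (ε δ : ℝ) (hε : ε ∈ Set.Ioo (0:ℝ) 1) (hδ : δ ∈ Set.Ioo (0:ℝ) 1)
    (M : D → Measure ℝ)
    (hM : ∀ d, M d = gaussianReal (F d)
      (Real.toNNReal ((2 * Δ ^ 2 / ε ^ 2) * Real.log (5 / (4 * δ))))) :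
    ∀ d d', adj d d' → ∀ s : Set ℝ, MeasurableSet s →
      M d s ≤ ENNReal.ofReal (Real.exp ε) * M d' s + ENNReal.ofReal δ := by
  intro d d' hadj s _
  rw [hM d, hM d']
  exact gaussianReal_le_exp_mul_add_of_abs_sub_le (hsens d d' hadj) hε hδ s

theorem gaussian_mechanism {D : Type*} (adj : D → D → Prop)
    (F : D → ℝ) (Δ : ℝ) (hΔ : 0 ≤ Δ)
    (hsens : ∀ d d', adj d d' → |F d - F d'| ≤ Δ)
    (ε δ : ℝ) (hε : ε ∈ Set.Ioo (0:ℝ) 1) (hδ : δ ∈ Set.Ioo (0:ℝ) 1)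
    (M : D → Measure ℝ)
    (hM : ∀ d, M d = gaussianReal (F d)
      (Real.toNNReal ((2 * Δ ^ 2 / ε ^ 2) * Real.log (5 / (4 * δ))))) :
    ∀ d d', adj d d' → ∀ s : Set ℝ, MeasurableSet s →
      M d s ≤ ENNReal.ofReal (Real.exp ε) * M d' s + ENNReal.ofReal δ :=
  gaussian_mechanism_general adj F Δ hsens ε δ hε hδ M hM
end
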